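/- arXiv:2103.07647 — 2 statements merged into one kernel-verified Lean document; each statement's English description precedes it below -/
import Mathlib

section
/- Let X ⊆ ℂⁿ be open and let f₁,…,f_ν be holomorphic on X. In ℂⁿ × ℂ^ν with coordinates (x, y) define Fⱼ(x, y) = yⱼ − fⱼ(x) on Ω = X × ℂ^ν. Then the system (F₁,…,F_ν) satisfies property (A) on Ω; explicitly: for every q ∈ {2,…,ν}, every point P ∈ Ω, and all functions α₁,…,α_q holomorphic on an open neighborhood U ⊆ Ω of P with α₁F₁ + ⋯ + α_qF_q = 0 on U, there exist an open neighborhood V ⊆ U of P and holomorphic functions β₁,…,β_{q−1} on V with α_q = β₁F₁ + ⋯ + β_{q−1}F_{q−1} on V. -/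
/-!
Put `w = F_q` and let `v` be the unit vector in the `y_q`-direction, so that `F_1, …, F_{q-1}`
are constant along `v` while `w (z + a • v) = w z + a`. Where `w ≠ 0` one simply divides the
relation by `w`. Near a zero of `w`, Hadamard's lemma in the direction `v` gives
`α_i z - α_i (z - w z • v) = w z * γ_i z` with `γ_i` holomorphic; it is obtained from a Cauchy
integral over a circle in the `v`-direction, whose holomorphic dependence on `z` is proved by
differentiating under the integral sign, with Lipschitz bounds coming from the Schwarz lemma.
The relation at `z - w z • v`, where `w` vanishes and `F_1, …, F_{q-1}` are unchanged, subtracted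
from the relation at `z`, gives `w * (α_q + ∑ γ_i F_i) = 0`. As `w` restricted to every line
`z + ℂ • v` is a nonconstant affine function, continuity yields `α_q = -∑ γ_i F_i`.
-/

open Set Metric Complex Topology MeasureTheory Real

variable {E F : Type*} [NormedAddCommGroup E] [NormedSpace ℂ E]
  [NormedAddCommGroup F] [NormedSpace ℂ F]

theorem DiffContOnCl.sub_smul_circleIntegral_inv_mul_smul [CompleteSpace F] {g : ℂ → F}
    {c a b : ℂ} {R : ℝ} (hg : DiffContOnCl ℂ g (ball c R)) (ha : a ∈ ball c R)
    (hb : b ∈ ball c R) :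
    (a - b) • (∮ s in C(c, R), ((s - a) * (s - b))⁻¹ • g s) =
      (2 * π * I : ℂ) • (g a - g b) := by
  have hR : 0 ≤ R := (nonempty_ball.1 ⟨a, ha⟩).le
  have hne : ∀ x ∈ ball c R, ∀ s ∈ sphere c R, s - x ≠ 0 := fun x hx s hs =>
    sub_ne_zero.2 fun h => (disjoint_left.1 sphere_disjoint_ball) hs (h ▸ hx)
  have hint : ∀ x ∈ ball c R, CircleIntegrable (fun s => (s - x)⁻¹ • g s) c R := fun x hx =>
    ContinuousOn.circleIntegrable hR <|
      ((continuousOn_id.sub continuousOn_const).inv₀ (hne x hx)).smul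
        (hg.continuousOn_ball.mono sphere_subset_closedBall)
  have hsplit : EqOn (fun s => (a - b) • ((s - a) * (s - b))⁻¹ • g s)
      (fun s => (s - a)⁻¹ • g s - (s - b)⁻¹ • g s) (sphere c R) := by
    intro s hs
    simp only [smul_smul, ← sub_smul]
    congr 1
    field_simp [hne a ha s hs, hne b hb s hs]
    ring
  rw [← circleIntegral.integral_smul, circleIntegral.integral_congr hR hsplit,
    circleIntegral.integral_sub (hint a ha) (hint b hb), hg.circleIntegral_sub_inv_smul ha,
    hg.circleIntegral_sub_inv_smul hb, smul_sub]

theorem dist_le_two_mul_div_mul_dist_of_norm_le {f : E → F} {c z : E} {r M : ℝ}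
    (hd : DifferentiableOn ℂ f (ball c r)) (hM : ∀ x ∈ ball c r, ‖f x‖ ≤ M)
    (hz : z ∈ ball c r) : dist (f z) (f c) ≤ 2 * M / r * dist z c := by
  have hc : c ∈ ball c r := mem_ball_self (nonempty_ball.1 ⟨z, hz⟩)
  refine Complex.dist_le_div_mul_dist_of_mapsTo_ball hd (fun x hx => ?_) hz
  rw [mem_closedBall, dist_eq_norm]
  linarith [norm_sub_le (f x) (f c), hM x hx, hM c hc]

theorem DifferentiableOn.exists_norm_sub_le_mul_norm_sub [ProperSpace E] {H : E × ℂ → F}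
    {O : Set (E × ℂ)} (hH : DifferentiableOn ℂ H O) (hO : IsOpen O) {K : Set ℂ}
    (hK : IsCompact K) {z₀ : E} (hz₀ : ∀ s ∈ K, (z₀, s) ∈ O) :
    ∃ δ > 0, ∃ C, ∀ z ∈ ball z₀ δ, ∀ s ∈ K,
      (z, s) ∈ O ∧ ‖H (z, s) - H (z₀, s)‖ ≤ C * ‖z - z₀‖ := by
  have hK' : IsCompact ({z₀} ×ˢ K) := isCompact_singleton.prod hK
  obtain ⟨δ, hδ, hδO⟩ := hK'.exists_cthickening_subset_open hO (by
    rintro ⟨z, s⟩ ⟨rfl, hs⟩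
    exact hz₀ s hs)
  obtain ⟨M, hM⟩ := (hK'.cthickening (r := δ)).exists_bound_of_continuousOn
    (hH.continuousOn.mono hδO)
  have hmem : ∀ z ∈ ball z₀ δ, ∀ s ∈ K, (z, s) ∈ cthickening δ ({z₀} ×ˢ K) :=
    fun z hz s hs => thickening_subset_cthickening _ _ <| mem_thickening_iff.2
      ⟨(z₀, s), ⟨rfl, hs⟩, by simpa [Prod.dist_eq] using hz⟩
  refine ⟨δ, hδ, 2 * M / δ, fun z hz s hs => ⟨hδO (hmem z hz s hs), ?_⟩⟩
  rw [← dist_eq_norm, ← dist_eq_norm]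
  exact dist_le_two_mul_div_mul_dist_of_norm_le (f := fun z => H (z, s))
    (hH.comp (differentiableOn_id.prodMk (differentiableOn_const _)) fun x hx =>
      hδO (hmem x hx s hs)) (fun x hx => hM _ (hmem x hx s hs)) hz

theorem DifferentiableOn.differentiableAt_circleIntegral [FiniteDimensional ℂ E]
    [FiniteDimensional ℂ F] {H : E × ℂ → F} {O : Set (E × ℂ)} (hH : DifferentiableOn ℂ H O)
    (hO : IsOpen O) {c : ℂ} {R : ℝ} (hR : 0 ≤ R) {z₀ : E}
    (hz₀ : ∀ s ∈ sphere c R, (z₀, s) ∈ O) :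
    DifferentiableAt ℂ (fun z => ∮ s in C(c, R), H (z, s)) z₀ := by
  borelize (E × ℂ)
  obtain ⟨δ, hδ, C, hC⟩ := hH.exists_norm_sub_le_mul_norm_sub hO (isCompact_sphere c R) hz₀
  have hmem : ∀ z ∈ ball z₀ δ, ∀ θ, (z, circleMap c R θ) ∈ O := fun z hz θ =>
    (hC z hz _ (circleMap_mem_sphere c hR θ)).1
  set G : E → ℝ → F := fun z θ => (circleMap 0 R θ * I) • H (z, circleMap c R θ)
  set G' : ℝ → E →L[ℂ] F := fun θ => (circleMap 0 R θ * I) •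
    (fderiv ℂ H (z₀, circleMap c R θ)).comp (ContinuousLinearMap.inl ℂ E ℂ)
  have hGcont : ∀ z ∈ ball z₀ δ, Continuous (G z) := fun z hz =>
    ((continuous_circleMap 0 R).mul continuous_const).smul <|
      hH.continuousOn.comp_continuous (continuous_const.prodMk (continuous_circleMap c R))
        (hmem z hz)
  have hlip : ∀ θ, ∀ z ∈ ball z₀ δ, ‖G z θ - G z₀ θ‖ ≤ |R| * C * ‖z - z₀‖ := fun θ z hz => by
    simp only [G, ← smul_sub, norm_smul, norm_mul, norm_circleMap_zero, norm_I, mul_one,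
      mul_assoc]
    exact mul_le_mul_of_nonneg_left (hC z hz _ (circleMap_mem_sphere c hR θ)).2 (abs_nonneg R)
  have hderiv : ∀ θ, HasFDerivAt (G · θ) (G' θ) z₀ := fun θ =>
    ((hH.differentiableAt (hO.mem_nhds (hmem z₀ (mem_ball_self hδ) θ))).hasFDerivAt.comp z₀
      (hasFDerivAt_prodMk_left z₀ _)).const_smul _
  have hG'meas : Measurable G' :=
    ((continuous_circleMap 0 R).mul continuous_const).measurable.smul <|
      (continuous_id.clm_comp continuous_const).measurable.comp <|
        (measurable_fderiv ℂ H).comp (continuous_const.prodMk (continuous_circleMap c R)).measurable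
  have key := hasFDerivAt_integral_of_dominated_loc_of_lip' (μ := volume.restrict (Ioc 0 (2 * π)))
    (ball_mem_nhds z₀ hδ) (fun z hz => (hGcont z hz).aestronglyMeasurable)
    ((hGcont z₀ (mem_ball_self hδ)).integrableOn_Ioc) hG'meas.aestronglyMeasurable
    (ae_of_all _ hlip) (integrable_const _) (ae_of_all _ hderiv)
  convert key.2.differentiableAt using 2 with z
  simp only [circleIntegral, deriv_circleMap]
  exact intervalIntegral.integral_of_le two_pi_pos.le

theorem sub_apply_sub_smul_eq_smul_circleIntegral [CompleteSpace F] {α : E → F} {z v : E}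
    {a : ℂ} {R : ℝ} (hα : DifferentiableOn ℂ (fun s : ℂ => α (z + (s - a) • v)) (closedBall 0 R))
    (ha : ‖a‖ < R) :
    α z - α (z - a • v) =
      a • (2 * π * I : ℂ)⁻¹ • ∮ s in C(0, R), ((s - a) * s)⁻¹ • α (z + (s - a) • v) := by
  have hcauchy := DiffContOnCl.sub_smul_circleIntegral_inv_mul_smul (a := a) (b := 0)
    (hα.diffContOnCl_ball subset_rfl) (mem_ball_zero_iff.2 ha)
    (mem_ball_self ((norm_nonneg a).trans_lt ha))
  simp only [sub_self, zero_smul, add_zero, zero_sub, neg_smul, ← sub_eq_add_neg, sub_zero]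
    at hcauchy
  rw [smul_comm, hcauchy, smul_smul, inv_mul_cancel₀ (by simp [pi_ne_zero, I_ne_zero]), one_smul]

theorem exists_forall_mem_ball_add_sub_smul_mem {U : Set E} (hU : IsOpen U) {w : E → ℂ}
    (hw : ContinuousOn w U) (v : E) {P : E} (hP : P ∈ U) (hwP : w P = 0) :
    ∃ δ > 0, ∀ z ∈ ball P δ, ∀ s ∈ ball (0 : ℂ) δ, z ∈ U ∧ z + (s - w z) • v ∈ U := by
  have hφ : ContinuousOn (fun p : E × ℂ => p.1 + (p.2 - w p.1) • v) (U ×ˢ univ) :=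
    continuousOn_fst.add <|
      (continuousOn_snd.sub (hw.comp continuousOn_fst fun p hp => hp.1)).smul continuousOn_const
  obtain ⟨δ, hδ, hδS⟩ := Metric.isOpen_iff.1
    (hφ.isOpen_inter_preimage (hU.prod isOpen_univ) hU) (P, 0)
    ⟨⟨hP, trivial⟩, by simpa [hwP] using hP⟩
  rw [← ball_prod_same] at hδS
  exact ⟨δ, hδ, fun z hz s hs => ⟨(hδS (mk_mem_prod hz hs)).1.1, (hδS (mk_mem_prod hz hs)).2⟩⟩

theorem DifferentiableOn.exists_sub_apply_sub_smul_eq_smul [FiniteDimensional ℂ E]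
    [FiniteDimensional ℂ F] {U : Set E} (hU : IsOpen U) {α : E → F}
    (hα : DifferentiableOn ℂ α U) {w : E → ℂ} (hw : DifferentiableOn ℂ w U) (v : E) {P : E}
    (hP : P ∈ U) (hwP : w P = 0) :
    ∃ V, IsOpen V ∧ P ∈ V ∧ V ⊆ U ∧ ∃ γ : E → F, DifferentiableOn ℂ γ V ∧
      ∀ z ∈ V, z - w z • v ∈ U ∧ α z - α (z - w z • v) = w z • γ z := by
  set φ : E × ℂ → E := fun p => p.1 + (p.2 - w p.1) • v
  have hφ : DifferentiableOn ℂ φ (U ×ˢ univ) :=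
    differentiableOn_fst.add <|
      (differentiableOn_snd.sub (hw.comp differentiableOn_fst fun p hp => hp.1)).smul_const v
  obtain ⟨δ, hδ, hS⟩ := exists_forall_mem_ball_add_sub_smul_mem hU hw.continuousOn v hP hwP
  -- On `V` we have `‖w z‖ < δ / 4`, so the circle `‖s‖ = δ / 2` lies in the annulus `A`,
  -- on which the Cauchy kernel `((s - w z) * s)⁻¹` has no poles.
  set V := ball P δ ∩ w ⁻¹' ball 0 (δ / 4)
  have hVU : V ⊆ U := fun z hz => (hS z hz.1 0 (mem_ball_self hδ)).1
  set A : Set ℂ := ball 0 δ \ closedBall 0 (δ / 4)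
  set H : E × ℂ → F := fun p => ((p.2 - w p.1) * p.2)⁻¹ • α (φ p)
  have hH : DifferentiableOn ℂ H (V ×ˢ A) := by
    have hne : ∀ p ∈ V ×ˢ A, (p.2 - w p.1) * p.2 ≠ 0 := by
      rintro ⟨z, s⟩ ⟨⟨-, hz⟩, hs, hs'⟩
      simp only [mem_preimage, mem_ball_zero_iff, mem_closedBall_zero_iff, not_le] at hz hs hs' ⊢
      refine mul_ne_zero (sub_ne_zero.2 fun h => ?_) (norm_pos_iff.1 (by linarith))
      rw [h] at hs'
      linarith
    refine (((differentiableOn_snd.sub (hw.comp differentiableOn_fst fun p hp => hVU hp.1)).mul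
      differentiableOn_snd).inv hne).smul (hα.comp (hφ.mono fun p hp => ⟨hVU hp.1, trivial⟩) ?_)
    exact fun p hp => (hS p.1 hp.1.1 p.2 hp.2.1).2
  have hV : IsOpen V :=
    (hw.continuousOn.mono fun z hz => (hS z hz 0 (mem_ball_self hδ)).1).isOpen_inter_preimage
      isOpen_ball isOpen_ball
  have hsphere : sphere (0 : ℂ) (δ / 2) ⊆ A := fun s hs => by
    rw [mem_sphere_zero_iff_norm] at hs
    simp only [A, Set.mem_sdiff, mem_ball_zero_iff, mem_closedBall_zero_iff, hs, not_le]
    constructor <;> linarith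
  refine ⟨V, hV, ⟨mem_ball_self hδ, by simp [hwP, hδ]⟩, hVU,
    fun z => (2 * π * I : ℂ)⁻¹ • ∮ s in C(0, δ / 2), H (z, s), fun z hz => ?_, fun z hz => ?_⟩
  · exact ((hH.differentiableAt_circleIntegral (hV.prod (isOpen_ball.sdiff isClosed_closedBall))
      (by positivity) fun s hs => ⟨hz, hsphere hs⟩).const_smul _).differentiableWithinAt
  have hφz : ∀ s, φ (z, s) = z + (s - w z) • v := fun s => rfl
  refine ⟨by simpa [hφz, sub_eq_add_neg] using (hS z hz.1 0 (mem_ball_self hδ)).2, ?_⟩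
  have hg : DifferentiableOn ℂ (fun s => α (φ (z, s))) (closedBall 0 (δ / 2)) :=
    hα.comp (hφ.comp (differentiableOn_const z |>.prodMk differentiableOn_id)
      fun s _ => ⟨hVU hz, trivial⟩) fun s hs =>
        (hS z hz.1 s (closedBall_subset_ball (by linarith) hs)).2
  exact sub_apply_sub_smul_eq_smul_circleIntegral hg (by linarith [mem_ball_zero_iff.1 hz.2])

theorem eq_zero_of_mul_eq_zero_of_add_smul {V : Set E} (hV : IsOpen V) {w g : E → ℂ} {v : E}
    (hwv : ∀ z (a : ℂ), w (z + a • v) = w z + a)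
    (hg : ∀ z ∈ V, ContinuousAt (fun a : ℂ => g (z + a • v)) 0)
    (hwg : ∀ z ∈ V, w z * g z = 0) : ∀ z ∈ V, g z = 0 := by
  intro z hz
  by_cases hwz : w z = 0
  · have hline : ∀ᶠ a : ℂ in 𝓝 0, z + a • v ∈ V :=
      (continuous_const.add (continuous_id.smul continuous_const)).continuousAt.preimage_mem_nhds
        (by simpa using hV.mem_nhds hz)
    have hne : (fun a : ℂ => g (z + a • v)) =ᶠ[𝓝[≠] 0] fun _ => 0 := by
      filter_upwards [nhdsWithin_le_nhds hline, self_mem_nhdsWithin] with a ha ha0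
      simpa [hwv, hwz, mem_compl_singleton_iff.1 ha0] using hwg _ ha
    simpa using ((hg z hz).eventuallyEq_nhds_iff_eventuallyEq_nhdsNE continuousAt_const).1
      hne |>.eq_of_nhds
  · exact (mul_eq_zero.1 (hwg z hz)).resolve_left hwz

variable {ι : Type*} [Fintype ι]

/-- `g` is congruent to `0` modulo `(F i)ᵢ` at `P`, on a neighbourhood of `P` inside `U`. -/
def IsLocalCombination (F : ι → E → ℂ) (U : Set E) (g : E → ℂ) (P : E) : Prop :=
  ∃ V, IsOpen V ∧ P ∈ V ∧ V ⊆ U ∧ ∃ β : ι → E → ℂ,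
    (∀ i, DifferentiableOn ℂ (β i) V) ∧ ∀ z ∈ V, g z = ∑ i, β i z * F i z

theorem isLocalCombination_of_ne_zero {U : Set E} (hU : IsOpen U) {F : ι → E → ℂ}
    {w : E → ℂ} (hw : DifferentiableOn ℂ w U) {α : ι → E → ℂ}
    (hα : ∀ i, DifferentiableOn ℂ (α i) U) {g : E → ℂ}
    (hrel : ∀ z ∈ U, ∑ i, α i z * F i z + g z * w z = 0) {P : E} (hP : P ∈ U)
    (hwP : w P ≠ 0) : IsLocalCombination F U g P := by
  refine ⟨U ∩ w ⁻¹' {0}ᶜ, hw.continuousOn.isOpen_inter_preimage hU isOpen_compl_singleton,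
    ⟨hP, hwP⟩, inter_subset_left, fun i z => -α i z * (w z)⁻¹,
    fun i => ((hα i).mono inter_subset_left).neg.mul <| (hw.mono inter_subset_left).inv
      fun z (hz : z ∈ U ∩ w ⁻¹' {0}ᶜ) => hz.2,
    fun z hz => ?_⟩
  have hwz : w z ≠ 0 := hz.2
  simp only [neg_mul, mul_right_comm _ (w z)⁻¹, Finset.sum_neg_distrib, ← Finset.sum_mul]
  field_simp
  linear_combination hrel z hz.1

theorem isLocalCombination_of_eq_zero [FiniteDimensional ℂ E] {U : Set E} (hU : IsOpen U)
    {F : ι → E → ℂ} {w : E → ℂ} (hw : DifferentiableOn ℂ w U) {v : E}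
    (hFv : ∀ i z (a : ℂ), F i (z + a • v) = F i z) (hwv : ∀ z (a : ℂ), w (z + a • v) = w z + a)
    {α : ι → E → ℂ} (hα : ∀ i, DifferentiableOn ℂ (α i) U) {g : E → ℂ}
    (hg : DifferentiableOn ℂ g U) (hrel : ∀ z ∈ U, ∑ i, α i z * F i z + g z * w z = 0)
    {P : E} (hP : P ∈ U) (hwP : w P = 0) : IsLocalCombination F U g P := by
  obtain ⟨V, hV, hPV, hVU, γ, hγ, hdiv⟩ :=
    (differentiableOn_pi.2 hα).exists_sub_apply_sub_smul_eq_smul hU hw v hP hwP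
  have hkey : ∀ z ∈ V, w z * (g z + ∑ i, γ z i * F i z) = 0 := by
    intro z hz
    have hshift : z - w z • v = z + (-w z) • v := by rw [neg_smul, sub_eq_add_neg]
    have hα' : ∀ i, α i (z - w z • v) = α i z - w z * γ z i := fun i => by
      have := congrFun (hdiv z hz).2 i
      simp only [Pi.sub_apply, Pi.smul_apply, smul_eq_mul] at this
      linear_combination -this
    have hF' : ∀ i, F i (z - w z • v) = F i z := fun i => hshift ▸ hFv i z _
    have hw' : w (z - w z • v) = 0 := by rw [hshift, hwv]; ring
    have h' := hrel _ (hdiv z hz).1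
    simp only [hF', hw', hα', mul_zero, add_zero] at h'
    have hsum : ∑ i, (α i z - w z * γ z i) * F i z =
        ∑ i, α i z * F i z - w z * ∑ i, γ z i * F i z := by
      rw [Finset.mul_sum, ← Finset.sum_sub_distrib]
      exact Finset.sum_congr rfl fun i _ => by ring
    linear_combination hrel z (hVU hz) - h' + hsum
  have hcont : ∀ z ∈ V,
      ContinuousAt (fun a : ℂ => g (z + a • v) + ∑ i, γ (z + a • v) i * F i (z + a • v)) 0 := by
    intro z hz
    have hline : ContinuousAt (fun a : ℂ => z + a • v) 0 := by fun_prop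
    have hz0 : z + (0 : ℂ) • v = z := by simp
    simp only [hFv]
    exact ((hg.continuousOn.continuousAt (hU.mem_nhds (hVU hz))).comp_of_eq hline hz0).add
      (tendsto_finsetSum _ fun i _ =>
        (((differentiableOn_pi.1 hγ i).continuousOn.continuousAt (hV.mem_nhds hz)).comp_of_eq
          hline hz0).mul continuousAt_const)
  have hzero := eq_zero_of_mul_eq_zero_of_add_smul hV hwv hcont hkey
  refine ⟨V, hV, hPV, hVU, fun i z => -γ z i, fun i => (differentiableOn_pi.1 hγ i).neg,
    fun z hz => ?_⟩
  simp only [neg_mul, Finset.sum_neg_distrib]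
  linear_combination hzero z hz

theorem isLocalCombination_of_sum_mul_add_mul_eq_zero [FiniteDimensional ℂ E] {U : Set E}
    (hU : IsOpen U) {F : ι → E → ℂ} {w : E → ℂ} (hw : DifferentiableOn ℂ w U) {v : E}
    (hFv : ∀ i z (a : ℂ), F i (z + a • v) = F i z) (hwv : ∀ z (a : ℂ), w (z + a • v) = w z + a)
    {α : ι → E → ℂ} (hα : ∀ i, DifferentiableOn ℂ (α i) U) {g : E → ℂ}
    (hg : DifferentiableOn ℂ g U) (hrel : ∀ z ∈ U, ∑ i, α i z * F i z + g z * w z = 0)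
    {P : E} (hP : P ∈ U) : IsLocalCombination F U g P := by
  by_cases hwP : w P = 0
  · exact isLocalCombination_of_eq_zero hU hw hFv hwv hα hg hrel hP hwP
  · exact isLocalCombination_of_ne_zero hU hw hα hrel hP hwP

/-- The system `Fⱼ(x,y) = yⱼ − fⱼ(x)` attached to an Oka map satisfies property (A)
on `Ω = X × ℂ^ν`. -/
theorem oka_map_property_A (n ν : ℕ) (X : Set (Fin n → ℂ))
    (f : Fin ν → (Fin n → ℂ) → ℂ) (hf : ∀ j, DifferentiableOn ℂ (f j) X) :
    ∀ (q : ℕ) (hq2 : 2 ≤ q) (hqν : q ≤ ν),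
    ∀ P ∈ X ×ˢ (univ : Set (Fin ν → ℂ)),
    ∀ U : Set ((Fin n → ℂ) × (Fin ν → ℂ)), IsOpen U → P ∈ U → U ⊆ X ×ˢ univ →
    ∀ α : Fin q → ((Fin n → ℂ) × (Fin ν → ℂ)) → ℂ,
      (∀ i, DifferentiableOn ℂ (α i) U) →
      (∀ z ∈ U, ∑ i : Fin q,
        α i z * (z.2 (Fin.castLE hqν i) - f (Fin.castLE hqν i) z.1) = 0) →
    ∃ V : Set ((Fin n → ℂ) × (Fin ν → ℂ)), IsOpen V ∧ P ∈ V ∧ V ⊆ U ∧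
      ∃ β : Fin (q - 1) → ((Fin n → ℂ) × (Fin ν → ℂ)) → ℂ,
        (∀ i, DifferentiableOn ℂ (β i) V) ∧
        ∀ z ∈ V, α ⟨q - 1, by omega⟩ z = ∑ i : Fin (q - 1),
          β i z * (z.2 (Fin.castLE (by omega) i) - f (Fin.castLE (by omega) i) z.1) := by
  intro q _ hqν P _ U hU hPU hUX α hα hrel
  obtain ⟨r, rfl⟩ : ∃ r, q = r + 1 := ⟨q - 1, by omega⟩
  set j := Fin.castLE hqν (Fin.last r)
  have hw : DifferentiableOn ℂ (fun z : (Fin n → ℂ) × (Fin ν → ℂ) => z.2 j - f j z.1) U :=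
    (differentiableOn_pi.1 differentiableOn_snd j).fun_sub <|
      (hf j).comp differentiableOn_fst fun z hz => (hUX hz).1
  refine isLocalCombination_of_sum_mul_add_mul_eq_zero (v := (0, Pi.single j 1))
    (F := fun i z => z.2 (Fin.castLE (by omega) i) - f (Fin.castLE (by omega) i) z.1)
    (α := fun i => α i.castSucc) hU hw (fun i z a => ?_) (fun z a => ?_) (fun i => hα _)
    (hα (Fin.last r)) (fun z hz => ?_) hPU
  · have hij : Fin.castLE (by omega) i ≠ j := Fin.ne_of_val_ne i.isLt.ne
    simp [Pi.single_eq_of_ne hij]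
  · simp only [Prod.smul_mk, smul_zero, Prod.snd_add, Prod.fst_add, add_zero, Pi.add_apply,
      Pi.smul_apply, Pi.single_eq_same, smul_eq_mul, mul_one]
    ring
  · rw [← hrel z hz, Fin.sum_univ_castSucc]
    rfl
end

section
/- Let Ω ⊆ ℂⁿ be open, P₀ ∈ Ω, and φ : Ω → ℝ twice continuously differentiable (over ℝ, viewing ℂⁿ as a real vector space). Assume the Levi form of φ at P₀ is strictly positive definite, i.e. for every v ∈ ℂⁿ with v ≠ 0 one has D²φ(P₀)(v, v) + D²φ(P₀)(i·v, i·v) > 0, where D²φ(P₀) is the second real Fréchet derivative of φ at P₀ (this sum equals 4·Σ_{j,k} ∂²φ/∂z_j∂z̄_k(P₀) v_j conj(v_k)). Then there exist a polynomial function f : ℂⁿ → ℂ of total degree at most 2 (in the complex coordinates z₁,…,zₙ) with f(P₀) = 0, and ε > 0 with the ball of radius ε around P₀ contained in Ω, such that for every z with ‖z − P₀‖ < ε, f(z) = 0 and z ≠ P₀, one has φ(z) > φ(P₀). -/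
/-!
Write `A` and `B` for the first and second real derivatives of `φ` at `P₀`. Splitting `B` into
its `I`-invariant and `I`-anti-invariant parts gives `2 B = L + L'`, with the Levi form
`L v w = B v w + B (I v) (I w)` and `L' v w = B v w - B (I v) (I w)`. The form `L'` is the real
part of a complex bilinear form `Q`, and `A` is the real part of a complex linear form `ℓ`, so
Taylor's formula reads `φ z - φ P₀ = Re f z + ¼ L h h + o(‖h‖²)` with `h = z - P₀` and the
holomorphic quadratic polynomial `f z = ℓ h + ¼ Q h h`. On the zero set of `f` only the Levi
term survives, and being positive definite it dominates the remainder near `P₀`.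
-/

open Filter Topology Asymptotics Metric Complex ContinuousLinearMap MvPolynomial

namespace LinearMap

variable {E F : Type*} [AddCommGroup E] [Module ℂ E] [AddCommGroup F] [Module ℂ F]

def complexOfMapISmul (f : E →ₗ[ℝ] F) (hf : ∀ v, f (I • v) = I • f v) : E →ₗ[ℂ] F where
  toFun := f
  map_add' := f.map_add
  map_smul' c v := by
    rw [RingHom.id_apply, ← re_add_im c, add_smul, add_smul, mul_smul, mul_smul,
      Complex.coe_smul, Complex.coe_smul, map_add, map_smul, map_smul, hf,
      Complex.coe_smul, Complex.coe_smul]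

end LinearMap

section LeviDecomposition

variable {E : Type*} [NormedAddCommGroup E] [NormedSpace ℂ E]

theorem StrongDual.extendRCLike_comp_lsmul_I (f : StrongDual ℝ E) :
    StrongDual.extendRCLike (𝕜 := ℂ) (f.comp (lsmul ℝ ℂ I)) = I • StrongDual.extendRCLike f := by
  ext w
  simp only [StrongDual.extendRCLike_apply, comp_apply, lsmul_apply, coe_algebraMap,
    RCLike.I_to_complex, smul_smul, I_mul_I, neg_one_smul, map_neg, smul_apply,
    smul_eq_mul]
  linear_combination (f (I • w) : ℂ) * I_mul_I

variable (B : E →L[ℝ] E →L[ℝ] ℝ)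

noncomputable def leviForm : E →L[ℝ] E →L[ℝ] ℝ :=
  B + B.bilinearComp (lsmul ℝ ℂ I) (lsmul ℝ ℂ I)

noncomputable def antiLeviForm : E →L[ℝ] E →L[ℝ] ℝ :=
  B - B.bilinearComp (lsmul ℝ ℂ I) (lsmul ℝ ℂ I)

theorem leviForm_apply (v w : E) : leviForm B v w = B v w + B (I • v) (I • w) := rfl

theorem antiLeviForm_apply (v w : E) : antiLeviForm B v w = B v w - B (I • v) (I • w) := rfl

theorem antiLeviForm_I_smul (v : E) :
    antiLeviForm B (I • v) = (antiLeviForm B v).comp (lsmul ℝ ℂ I) := by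
  ext w
  simp only [antiLeviForm_apply, comp_apply, lsmul_apply, smul_smul, I_mul_I, neg_one_smul,
    map_neg, neg_apply]
  ring

noncomputable def holomorphicPart : E →ₗ[ℂ] E →ₗ[ℂ] ℂ :=
  coeLM ℂ ∘ₗ
    (StrongDual.extendRCLikeₗ.toLinearMap ∘ₗ (antiLeviForm B).toLinearMap).complexOfMapISmul
      fun v => by
        simp [antiLeviForm_I_smul, StrongDual.extendRCLike_comp_lsmul_I,
          StrongDual.extendRCLikeₗ_apply]

theorem re_holomorphicPart_apply (v w : E) :
    (holomorphicPart B v w).re = antiLeviForm B v w :=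
  StrongDual.re_extendRCLike_apply (𝕜 := ℂ) _ w

end LeviDecomposition

section Polynomial

variable {𝕜 ι : Type*} [RCLike 𝕜] [Fintype ι] [DecidableEq ι]

theorem EuclideanSpace.sum_apply_smul_single (w : EuclideanSpace 𝕜 ι) :
    ∑ i, w i • EuclideanSpace.single i (1 : 𝕜) = w := by
  simpa using (EuclideanSpace.basisFun ι 𝕜).sum_repr w

theorem exists_totalDegree_le_two_eval_eq (ℓ : EuclideanSpace 𝕜 ι →ₗ[𝕜] 𝕜)
    (Q : EuclideanSpace 𝕜 ι →ₗ[𝕜] EuclideanSpace 𝕜 ι →ₗ[𝕜] 𝕜) (x : EuclideanSpace 𝕜 ι) :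
    ∃ p : MvPolynomial ι 𝕜, p.totalDegree ≤ 2 ∧
      ∀ z : EuclideanSpace 𝕜 ι, eval (fun i => z i) p = ℓ (z - x) + Q (z - x) (z - x) := by
  set e : ι → EuclideanSpace 𝕜 ι := fun i => EuclideanSpace.single i 1
  set Y : ι → MvPolynomial ι 𝕜 := fun i => X i - C (x i)
  have hY : ∀ i, (Y i).totalDegree ≤ 1 := fun i =>
    (totalDegree_sub_C_le _ _).trans (totalDegree_X i).le
  have hYeval : ∀ z : EuclideanSpace 𝕜 ι, ∀ i, eval (fun i => z i) (Y i) = (z - x) i := by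
    intro z i; simp [Y]
  refine ⟨∑ i, ℓ (e i) • Y i + ∑ i, ∑ j, Q (e i) (e j) • (Y i * Y j), ?_, fun z => ?_⟩
  · rw [← mem_restrictTotalDegree]
    refine Submodule.add_mem _ (Submodule.sum_mem _ fun i _ => Submodule.smul_mem _ _ ?_)
      (Submodule.sum_mem _ fun i _ => Submodule.sum_mem _ fun j _ => Submodule.smul_mem _ _ ?_)
    · rw [mem_restrictTotalDegree]; exact (hY i).trans one_le_two
    · rw [mem_restrictTotalDegree]; exact (totalDegree_mul _ _).trans (add_le_add (hY i) (hY j))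
  · conv_rhs => rw [← EuclideanSpace.sum_apply_smul_single (z - x)]
    simp only [map_add, map_sum, map_mul, map_smul, smul_eval, hYeval, smul_eq_mul,
      LinearMap.coe_sum, Finset.sum_apply, LinearMap.smul_apply, Finset.mul_sum, e]
    congr 1
    · exact Finset.sum_congr rfl fun i _ => mul_comm _ _
    · rw [Finset.sum_comm]
      exact Finset.sum_congr rfl fun i _ => Finset.sum_congr rfl fun j _ => by ring

end Polynomial

section Taylor

variable {E F : Type*} [NormedAddCommGroup E] [NormedSpace ℝ E] [NormedAddCommGroup F]
  [NormedSpace ℝ F]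

theorem isLittleO_sub_sq_of_hasFDerivAt {g : E → F} {g' : E → E →L[ℝ] F} {x : E}
    (hg : ∀ᶠ y in 𝓝 x, HasFDerivAt g (g' y) y) (hg' : g' =o[𝓝 x] fun y => y - x) :
    (fun y => g y - g x) =o[𝓝 x] fun y => ‖y - x‖ ^ 2 := by
  refine isLittleO_iff.2 fun ε hε => ?_
  obtain ⟨δ, hδ, hball⟩ := eventually_nhds_iff_ball.1 (hg.and (isLittleO_iff.1 hg' hε))
  filter_upwards [ball_mem_nhds x hδ] with y hy
  have hsub : closedBall x (dist y x) ⊆ ball x δ := closedBall_subset_ball (mem_ball.1 hy)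
  have hmv := (convex_closedBall x (dist y x)).norm_image_sub_le_of_norm_hasFDerivWithin_le
    (fun z hz => (hball z (hsub hz)).1.hasFDerivWithinAt)
    (fun z hz => (hball z (hsub hz)).2.trans
      (mul_le_mul_of_nonneg_left (by simpa [dist_eq_norm] using hz) hε.le))
    (mem_closedBall_self dist_nonneg) (mem_closedBall.2 le_rfl)
  simpa [sq, mul_assoc] using hmv

theorem ContDiffAt.isLittleO_taylor_two {φ : E → F} {x : E} (hφ : ContDiffAt ℝ 2 φ x) :
    (fun y => φ y - φ x - fderiv ℝ φ x (y - x)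
        - (1 / 2 : ℝ) • fderiv ℝ (fderiv ℝ φ) x (y - x) (y - x)) =o[𝓝 x]
      fun y => ‖y - x‖ ^ 2 := by
  set B := fderiv ℝ (fderiv ℝ φ) x
  have hB : HasFDerivAt (fderiv ℝ φ) B x :=
    ((hφ.fderiv_right (m := 1) (by norm_num)).differentiableAt one_ne_zero).hasFDerivAt
  have hsymm : ∀ v w, B v w = B w v :=
    (hφ.isSymmSndFDerivAt (by simp [minSmoothness_of_isRCLikeNormedField])).eq
  have hquad : ∀ y, HasFDerivAt (fun y => (1 / 2 : ℝ) • B (y - x) (y - x)) (B (y - x)) y := by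
    intro y
    refine (((B.hasFDerivAt.comp y ((hasFDerivAt_id y).sub_const x)).clm_apply
      ((hasFDerivAt_id y).sub_const x)).const_smul (1 / 2 : ℝ)).congr_fderiv ?_
    ext v
    simp only [id_eq, Function.comp_apply, map_sub, comp_id, smul_add, add_apply, smul_apply,
      sub_apply, flip_apply, hsymm v]
    module
  have hderiv : ∀ᶠ y in 𝓝 x, HasFDerivAt
      (fun y => φ y - fderiv ℝ φ x (y - x) - (1 / 2 : ℝ) • B (y - x) (y - x))
      (fderiv ℝ φ y - fderiv ℝ φ x - B (y - x)) y := by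
    filter_upwards [hφ.eventually (by simp)] with y hy
    exact (((hy.differentiableAt two_ne_zero).hasFDerivAt.sub
      (((fderiv ℝ φ x).hasFDerivAt).comp y ((hasFDerivAt_id y).sub_const x))).sub (hquad y))
  convert isLittleO_sub_sq_of_hasFDerivAt hderiv hB.isLittleO using 2 with y
  simp only [sub_self, map_zero, smul_zero, sub_zero]
  abel

end Taylor

section Coercive

variable {E : Type*} [NormedAddCommGroup E] [NormedSpace ℝ E]

theorem isCoercive_of_pos [FiniteDimensional ℝ E] (B : E →L[ℝ] E →L[ℝ] ℝ)
    (hB : ∀ u ≠ 0, 0 < B u u) : IsCoercive B := by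
  rcases subsingleton_or_nontrivial E with hE | hE
  · exact ⟨1, one_pos, fun u => by simp [Subsingleton.elim u 0]⟩
  obtain ⟨w₀, hw₀, hmin⟩ := (isCompact_sphere (0 : E) 1).exists_isMinOn
    (NormedSpace.sphere_nonempty.2 zero_le_one)
    (B.continuous₂.comp (continuous_id.prodMk continuous_id)).continuousOn
  refine ⟨B w₀ w₀, hB w₀ (ne_zero_of_mem_unit_sphere ⟨w₀, hw₀⟩), fun u => ?_⟩
  rcases eq_or_ne u 0 with rfl | hu
  · simp
  have hnorm : ‖u‖ ≠ 0 := norm_ne_zero_iff.2 hu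
  have hw : ‖u‖⁻¹ • u ∈ sphere (0 : E) 1 := by simp [norm_smul, hnorm]
  calc B w₀ w₀ * ‖u‖ * ‖u‖ ≤ B (‖u‖⁻¹ • u) (‖u‖⁻¹ • u) * ‖u‖ * ‖u‖ := by
        gcongr; exact hmin hw
    _ = B u u := by simp [field]

theorem IsCoercive.eventually_pos_of_isLittleO {L : E →L[ℝ] E →L[ℝ] ℝ} (hL : IsCoercive L)
    {g : E → ℝ} {x : E} (hg : (fun y => g y - L (y - x) (y - x)) =o[𝓝 x] fun y => ‖y - x‖ ^ 2) :
    ∀ᶠ y in 𝓝 x, y ≠ x → 0 < g y := by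
  obtain ⟨C, hC, hCL⟩ := hL
  filter_upwards [isLittleO_iff.1 hg (half_pos hC)] with y hy hne
  have hpos : 0 < ‖y - x‖ := norm_pos_iff.2 (sub_ne_zero.2 hne)
  have hlow := hCL (y - x)
  rw [Real.norm_eq_abs, norm_pow, norm_norm] at hy
  nlinarith [(abs_le.1 hy).1, mul_pos hC (mul_pos hpos hpos)]

end Coercive

/-- Oka's Theorem 5 (Report IX, 1943): at a point where the Levi form of a C²
function is strictly positive definite, there is a supporting analytic hypersurface
given by a holomorphic polynomial of degree at most 2. -/
theorem supporting_hypersurface_of_strict_levi (n : ℕ)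
    (Ω : Set (EuclideanSpace ℂ (Fin n))) (hΩ : IsOpen Ω)
    (P₀ : EuclideanSpace ℂ (Fin n)) (hP₀ : P₀ ∈ Ω)
    (φ : EuclideanSpace ℂ (Fin n) → ℝ) (hφ : ContDiffOn ℝ 2 φ Ω)
    (hLevi : ∀ v : EuclideanSpace ℂ (Fin n), v ≠ 0 →
      0 < fderiv ℝ (fderiv ℝ φ) P₀ v v
          + fderiv ℝ (fderiv ℝ φ) P₀ (Complex.I • v) (Complex.I • v)) :
    ∃ p : MvPolynomial (Fin n) ℂ, p.totalDegree ≤ 2 ∧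
      MvPolynomial.eval (fun i => P₀ i) p = 0 ∧
      ∃ ε > (0 : ℝ), Metric.ball P₀ ε ⊆ Ω ∧
        ∀ z ∈ Metric.ball P₀ ε, MvPolynomial.eval (fun i => z i) p = 0 → z ≠ P₀ →
          φ P₀ < φ z := by
  set A := fderiv ℝ φ P₀
  set B := fderiv ℝ (fderiv ℝ φ) P₀
  obtain ⟨p, hdeg, heval⟩ := exists_totalDegree_le_two_eval_eq
    (StrongDual.extendRCLike A : StrongDual ℂ _).toLinearMap ((1 / 4 : ℝ) • holomorphicPart B) P₀
  have hcoer : IsCoercive ((1 / 4 : ℝ) • leviForm B) := isCoercive_of_pos _ fun v hv => by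
    simpa [leviForm_apply] using hLevi v hv
  have hre : ∀ h, (StrongDual.extendRCLike A h : ℂ).re = A h :=
    StrongDual.re_extendRCLike_apply (𝕜 := ℂ) A
  have htaylor : (fun z => (φ z - φ P₀ - (eval (fun i => z i) p).re)
      - ((1 / 4 : ℝ) • leviForm B) (z - P₀) (z - P₀)) =o[𝓝 P₀] fun z => ‖z - P₀‖ ^ 2 := by
    refine (hφ.contDiffAt (hΩ.mem_nhds hP₀)).isLittleO_taylor_two.congr_left fun z => ?_
    simp only [heval, add_re, coe_coe, hre, LinearMap.smul_apply, smul_re, smul_apply,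
      re_holomorphicPart_apply, leviForm_apply, antiLeviForm_apply, smul_eq_mul]
    ring
  obtain ⟨ε, hε, hball⟩ := eventually_nhds_iff_ball.1
    ((hΩ.eventually_mem hP₀).and (hcoer.eventually_pos_of_isLittleO htaylor))
  refine ⟨p, hdeg, by simpa using heval P₀, ε, hε, fun z hz => (hball z hz).1,
    fun z hz hp hne => ?_⟩
  simpa [hp] using (hball z hz).2 hne
end
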